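/- If h satisfies Λ_0(h) = h''' = p and f is holomorphic with nonvanishing derivative, then H = (h∘f)/f' satisfies Λ_q(H) = P, where q = S(f) is the Schwarzian derivative of f and P = (p∘f)·(f')². -/

import Mathlib

/-!
Put `u = 1/f'`. Then `S(f) = ½ (u'/u)² - u''/u`, and differentiating this relation shows
`Λ_{S(f)}(u) = 0` (`u` is the square of a solution of `y'' + ½ S(f) y = 0`).
By the Leibniz rule `Λ_q(g u) = g''' u + 3 g'' u' + g' (3 u'' + 2 q u) + g Λ_q(u)`, so for
`g = h ∘ f` only the first three terms survive, and the chain rule collapses them to `h'''(f) f'²`.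
-/

/-- The third-order operator `Λ_q(F) = F''' + 2 q F' + q' F`. -/
noncomputable def Lambda (q F : ℂ → ℂ) (z : ℂ) : ℂ :=
  deriv (deriv (deriv F)) z + 2 * q z * deriv F z + deriv q z * F z

/-- The Schwarzian derivative `S(f) = f'''/f' - (3/2)(f''/f')²`. -/
noncomputable def schwarzian (f : ℂ → ℂ) (z : ℂ) : ℂ :=
  deriv (deriv (deriv f)) z / deriv f z - (3/2) * (deriv (deriv f) z / deriv f z) ^ 2

section EntireDerivatives

variable {f g : ℂ → ℂ}

theorem deriv_fun_add_eq (hf : Differentiable ℂ f) (hg : Differentiable ℂ g) :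
    deriv (fun w => f w + g w) = fun w => deriv f w + deriv g w :=
  funext fun w => deriv_fun_add (hf w) (hg w)

theorem deriv_fun_mul_eq (hf : Differentiable ℂ f) (hg : Differentiable ℂ g) :
    deriv (fun w => f w * g w) = fun w => deriv f w * g w + f w * deriv g w :=
  funext fun w => deriv_fun_mul (hf w) (hg w)

theorem deriv_comp_eq (hg : Differentiable ℂ g) (hf : Differentiable ℂ f) :
    deriv (fun w => g (f w)) = fun w => deriv g (f w) * deriv f w :=
  funext fun w => deriv_comp w (hg (f w)) (hf w)

theorem deriv_fun_inv_eq (hf : Differentiable ℂ f) (hf0 : ∀ z, f z ≠ 0) :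
    deriv (fun w => (f w)⁻¹) = fun w => -deriv f w / f w ^ 2 :=
  funext fun w => deriv_fun_inv'' (hf w) (hf0 w)

theorem deriv_deriv_fun_inv_eq (hf : Differentiable ℂ f) (hf0 : ∀ z, f z ≠ 0) :
    deriv (deriv (fun w => (f w)⁻¹)) =
      fun w => -deriv (deriv f) w / f w ^ 2 + 2 * deriv f w ^ 2 / f w ^ 3 := by
  ext w
  have hd : HasDerivAt (fun w => -deriv f w / f w ^ 2) _ w :=
    (hf.deriv w).hasDerivAt.fun_neg.div ((hf w).hasDerivAt.pow 2) (pow_ne_zero 2 (hf0 w))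
  rw [deriv_fun_inv_eq hf hf0, hd.deriv]
  have := hf0 w
  field_simp
  ring

end EntireDerivatives

theorem Lambda_mul (q : ℂ → ℂ) {g u : ℂ → ℂ} (hg : Differentiable ℂ g) (hu : Differentiable ℂ u)
    (z : ℂ) :
    Lambda q (fun w => g w * u w) z =
      deriv (deriv (deriv g)) z * u z + 3 * deriv (deriv g) z * deriv u z
        + deriv g z * (3 * deriv (deriv u) z + 2 * q z * u z) + g z * Lambda q u z := by
  simp (disch := fun_prop) only [Lambda, deriv_fun_add_eq, deriv_fun_mul_eq]
  ring

theorem Lambda_self_eq_zero {u : ℂ → ℂ} (hu : Differentiable ℂ u) (hu0 : ∀ z, u z ≠ 0) (z : ℂ) :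
    Lambda (fun w => (deriv u w / u w) ^ 2 / 2 - deriv (deriv u) w / u w) u z = 0 := by
  have hq : HasDerivAt (fun w => (deriv u w / u w) ^ 2 / 2 - deriv (deriv u) w / u w) _ z :=
    ((((hu.deriv z).hasDerivAt.fun_div (hu z).hasDerivAt (hu0 z)).pow 2).div_const 2).sub
      ((hu.deriv.deriv z).hasDerivAt.div (hu z).hasDerivAt (hu0 z))
  rw [Lambda, hq.deriv]
  simp only [Nat.cast_ofNat, Nat.reduceSub, pow_one]
  have := hu0 z
  field_simp
  ring

theorem schwarzian_eq_via_inv_deriv {f : ℂ → ℂ} (hf : Differentiable ℂ f)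
    (hf' : ∀ z, deriv f z ≠ 0) :
    schwarzian f = fun w => (deriv (fun w => (deriv f w)⁻¹) w / (deriv f w)⁻¹) ^ 2 / 2
      - deriv (deriv (fun w => (deriv f w)⁻¹)) w / (deriv f w)⁻¹ := by
  ext w
  rw [schwarzian, deriv_deriv_fun_inv_eq hf.deriv hf', deriv_fun_inv_eq hf.deriv hf']
  have := hf' w
  field_simp
  ring

theorem Lambda_schwarzian_inv_deriv {f : ℂ → ℂ} (hf : Differentiable ℂ f)
    (hf' : ∀ z, deriv f z ≠ 0) (z : ℂ) :
    Lambda (schwarzian f) (fun w => (deriv f w)⁻¹) z = 0 := by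
  rw [schwarzian_eq_via_inv_deriv hf hf']
  exact Lambda_self_eq_zero (hf.deriv.inv hf') (fun w => inv_ne_zero (hf' w)) z

/-- If `h''' = p` and `H = (h ∘ f)/f'`, then `Λ_{S(f)}(H) = (p ∘ f)·(f')²`. -/
theorem lambda_conjugation (f h p : ℂ → ℂ)
    (hf : Differentiable ℂ f) (hf' : ∀ z, deriv f z ≠ 0)
    (hh : Differentiable ℂ h)
    (hp : ∀ w, deriv (deriv (deriv h)) w = p w) :
    ∀ z, Lambda (schwarzian f) (fun w => h (f w) / deriv f w) z
      = p (f z) * (deriv f z) ^ 2 := by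
  intro z
  simp only [div_eq_mul_inv (h _)]
  rw [Lambda_mul (g := fun w => h (f w)) (u := fun w => (deriv f w)⁻¹) _ (hh.comp hf)
      (hf.deriv.inv hf'), Lambda_schwarzian_inv_deriv hf hf',
    deriv_deriv_fun_inv_eq hf.deriv hf', deriv_fun_inv_eq hf.deriv hf']
  simp (disch := fun_prop) only [deriv_comp_eq, deriv_fun_mul_eq, deriv_fun_add_eq, hp]
  have := hf' z
  rw [schwarzian]
  field_simp
  ring
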